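/- arXiv:1709.07495 — 4 statements merged into one kernel-verified Lean document; each statement's English description precedes it below -/
import Mathlib

section
/- If an LTL formula φ in negation normal form is Until-free, then φ is safe: every infinite trace that violates φ has a finite bad prefix. -/
/-- LTL formulas in negation normal form over atoms `P`. -/
inductive LTL (P : Type) : Type where
  | tt : LTL P
  | ff : LTL P
  | pos : P → LTL P
  | neg : P → LTL P
  | and : LTL P → LTL P → LTL P
  | or : LTL P → LTL P → LTL P
  | next : LTL P → LTL P
  | until_ : LTL P → LTL P → LTL P
  | release : LTL P → LTL P → LTL P

/-- Satisfaction of an LTL formula by an infinite trace at position `i`. -/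
def sat {P : Type} (ρ : ℕ → Set P) : LTL P → ℕ → Prop
  | .tt, _ => True
  | .ff, _ => False
  | .pos p, i => p ∈ ρ i
  | .neg p, i => p ∉ ρ i
  | .and f g, i => sat ρ f i ∧ sat ρ g i
  | .or f g, i => sat ρ f i ∨ sat ρ g i
  | .next f, i => sat ρ f (i + 1)
  | .until_ f g, i => ∃ j, i ≤ j ∧ sat ρ g j ∧ ∀ k, i ≤ k → k < j → sat ρ f k
  | .release f g, i => ∀ j, i ≤ j → sat ρ g j ∨ ∃ k, i ≤ k ∧ k < j ∧ sat ρ f k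

/-- `ρ ⊨ φ`. -/
def Models {P : Type} (ρ : ℕ → Set P) (φ : LTL P) : Prop := sat ρ φ 0

/-- Concatenation of a finite word with an infinite word. -/
def ext {A : Type} (x : List A) (y : ℕ → A) : ℕ → A :=
  fun n => if h : n < x.length then x.get ⟨n, h⟩ else y (n - x.length)

/-- The length-`n` prefix of an infinite word, as a finite word. -/
def prefList {A : Type} (ρ : ℕ → A) (n : ℕ) : List A :=
  List.ofFn (fun i : Fin n => ρ i.val)

/-- `x` is a bad prefix for `φ`: every infinite extension violates `φ`. -/
def BadPrefix {P : Type} (x : List (Set P)) (φ : LTL P) : Prop :=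
  ∀ y : ℕ → Set P, ¬ Models (ext x y) φ

/-- `x` is a good prefix for `φ`: every infinite extension satisfies `φ`. -/
def GoodPrefix {P : Type} (x : List (Set P)) (φ : LTL P) : Prop :=
  ∀ y : ℕ → Set P, Models (ext x y) φ

/-- `φ` is safe: every violating trace has a bad prefix. -/
def Safe {P : Type} (φ : LTL P) : Prop :=
  ∀ ρ : ℕ → Set P, ¬ Models ρ φ → ∃ n, BadPrefix (prefList ρ n) φ

/-- `φ` is co-safe: every satisfying trace has a good prefix. -/
def CoSafe {P : Type} (φ : LTL P) : Prop :=
  ∀ ρ : ℕ → Set P, Models ρ φ → ∃ n, GoodPrefix (prefList ρ n) φ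

/-- An NNF formula is Until-free if it contains no Until operator. -/
def UntilFree {P : Type} : LTL P → Prop
  | .tt => True
  | .ff => True
  | .pos _ => True
  | .neg _ => True
  | .and f g => UntilFree f ∧ UntilFree g
  | .or f g => UntilFree f ∧ UntilFree g
  | .next f => UntilFree f
  | .until_ _ _ => False
  | .release f g => UntilFree f ∧ UntilFree g

lemma untilFree_key {P : Type} (φ : LTL P) (h : UntilFree φ) :
    ∀ (ρ : ℕ → Set P) (i : ℕ), ¬ sat ρ φ i →
      ∃ n, ∀ σ : ℕ → Set P, (∀ k < n, σ k = ρ k) → ¬ sat σ φ i := by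
  induction φ with
  | tt => intro ρ i hi; exact absurd trivial hi
  | ff => intro ρ i _; exact ⟨0, fun σ _ hs => hs⟩
  | pos p =>
    intro ρ i hi
    exact ⟨i + 1, fun σ hagree hs => hi (by
      have := hagree i (Nat.lt_succ_self i)
      simpa [sat, this] using hs)⟩
  | neg p =>
    intro ρ i hi
    exact ⟨i + 1, fun σ hagree hs => hi (by
      have := hagree i (Nat.lt_succ_self i)
      simpa [sat, this] using hs)⟩
  | and f g ihf ihg =>
    intro ρ i hi
    rcases not_and_or.mp hi with hf | hg
    · obtain ⟨n, hn⟩ := ihf h.1 ρ i hf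
      exact ⟨n, fun σ ha hs => hn σ ha hs.1⟩
    · obtain ⟨n, hn⟩ := ihg h.2 ρ i hg
      exact ⟨n, fun σ ha hs => hn σ ha hs.2⟩
  | or f g ihf ihg =>
    intro ρ i hi
    rcases not_or.mp hi with ⟨hf, hg⟩
    obtain ⟨n1, hn1⟩ := ihf h.1 ρ i hf
    obtain ⟨n2, hn2⟩ := ihg h.2 ρ i hg
    refine ⟨max n1 n2, fun σ ha hs => ?_⟩
    rcases hs with hs | hs
    · exact hn1 σ (fun k hk => ha k (lt_of_lt_of_le hk (le_max_left _ _))) hs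
    · exact hn2 σ (fun k hk => ha k (lt_of_lt_of_le hk (le_max_right _ _))) hs
  | next f ihf =>
    intro ρ i hi
    obtain ⟨n, hn⟩ := ihf h ρ (i + 1) hi
    exact ⟨n, fun σ ha hs => hn σ ha hs⟩
  | until_ f g ihf ihg => exact absurd h (by simp [UntilFree])
  | release f g ihf ihg =>
    intro ρ i hi
    simp only [sat, not_forall] at hi
    obtain ⟨j, hij, hj⟩ := hi
    push_neg at hj
    obtain ⟨hgj, hfk⟩ := hj
    obtain ⟨ng, hng⟩ := ihg h.2 ρ j hgj
    have H : ∀ k : ℕ, ∃ n, i ≤ k → k < j → ∀ σ : ℕ → Set P,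
        (∀ m < n, σ m = ρ m) → ¬ sat σ f k := by
      intro k
      by_cases hk : i ≤ k ∧ k < j
      · obtain ⟨n, hn⟩ := ihf h.1 ρ k (hfk k hk.1 hk.2)
        exact ⟨n, fun _ _ => hn⟩
      · exact ⟨0, fun h1 h2 => absurd ⟨h1, h2⟩ hk⟩
    choose nf hnf using H
    refine ⟨max ng ((Finset.range j).sup nf), fun σ ha hs => ?_⟩
    rcases hs j hij with hgood | ⟨k, hik, hkj, hfsat⟩
    · exact hng σ (fun m hm => ha m (lt_of_lt_of_le hm (le_max_left _ _))) hgood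
    · refine hnf k hik hkj σ (fun m hm => ha m (lt_of_lt_of_le hm ?_)) hfsat
      exact le_trans (Finset.le_sup (Finset.mem_range.mpr hkj)) (le_max_right _ _)

/-- Every Until-free LTL formula in NNF is safe: each violating trace has a
finite bad prefix. -/
theorem untilFree_safe {P : Type} (φ : LTL P) (h : UntilFree φ) : Safe φ := by
  intro ρ hρ
  obtain ⟨n, hn⟩ := untilFree_key φ h ρ 0 hρ
  refine ⟨n, fun y => hn (ext (prefList ρ n) y) (fun k hk => ?_)⟩
  have hlen : (prefList ρ n).length = n := by simp [prefList]
  simp [ext, prefList, hlen, hk]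
end

section
/- The boolean formula f' encoding the safety game over a finite DSA A^s is satisfiable if and only if the safety game over A^s is realizable for the controller; moreover any satisfying assignment encodes a winning strategy. -/
/-- The run of the safety game with partial transition function `δ`
(`δ s X Y = none` means the transition is undefined) from state `s0`,
when the environment plays `xs` and the controller plays strategy `g`
(mapping the history of past inputs and the current input to an output).
`none` indicates that the run has already died. -/
def runG {S I O : Type} (δ : S → I → O → Option S) (g : List I → I → O)
    (xs : ℕ → I) (s0 : S) : ℕ → Option S
  | 0 => some s0
  | n + 1 => (runG δ g xs s0 n).bind fun s => δ s (xs n) (g (prefList xs n) (xs n))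

/-- The controller wins the safety game from `s0` iff it has a strategy keeping
the run alive forever, against all environment inputs. -/
def Realizable {S I O : Type} (δ : S → I → O → Option S) (s0 : S) : Prop :=
  ∃ g : List I → I → O, ∀ xs : ℕ → I, ∀ n : ℕ, (runG δ g xs s0 n).isSome

/-- Controllable predecessors: states from which, for every input, some output
leads (via a defined transition) into `E`. -/
def Pre {S I O : Type} (δ : S → I → O → Option S) (E : Set S) : Set S :=
  {s | ∀ X : I, ∃ Y : O, ∃ s', δ s X Y = some s' ∧ s' ∈ E}

/-- The fixpoint iteration `Win₀ = S`, `Win_{i+1} = Win_i ∩ Pre(Win_i)`. -/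
def WinIter {S I O : Type} (δ : S → I → O → Option S) : ℕ → Set S
  | 0 => Set.univ
  | i + 1 => WinIter δ i ∩ Pre δ (WinIter δ i)

lemma prefList_succ {A : Type} (ρ : ℕ → A) (n : ℕ) :
    prefList ρ (n+1) = prefList ρ n ++ [ρ n] := by
  rw [prefList, List.ofFn_succ']
  simp [prefList, List.concat_eq_append, Fin.last]

lemma prefList_cons {A : Type} (X : A) (xs' : ℕ → A) (n : ℕ) :
    prefList (fun k => Nat.casesOn k X xs') (n+1) = X :: prefList xs' n := by
  simp [prefList, List.ofFn_succ]

/-- Second part: a satisfying assignment yields a memoryless invariant strategy. -/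
lemma assignment_strategy {S I O : Type}
    (δ : S → I → O → Option S) (s0 : S)
    (ps : S → Prop) (pin : S → I → Prop) (pout : S → I → O → Prop)
    (h1 : ps s0)
    (h2 : ∀ s X, ps s → pin s X)
    (h3 : ∀ s X, pin s X → ∃ Y, pout s X Y)
    (h4 : ∀ s X Y s', δ s X Y = some s' → pout s X Y → ps s')
    (h5 : ∀ s X Y, δ s X Y = none → ¬ pout s X Y) :
    ∃ ω : S → I → O, ∀ s X, ps s → ∃ s', δ s X (ω s X) = some s' ∧ ps s' := by
  classical
  by_cases hO : Nonempty O
  · obtain ⟨Yd⟩ := hO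
    refine ⟨fun s X => if h : ∃ Y, pout s X Y then h.choose else Yd, ?_⟩
    intro s X hs
    have hex : ∃ Y, pout s X Y := h3 s X (h2 s X hs)
    simp only [dif_pos hex]
    have hpo := hex.choose_spec
    cases hδ : δ s X hex.choose with
    | none => exact absurd hpo (h5 _ _ _ hδ)
    | some s' => exact ⟨s', rfl, h4 _ _ _ _ hδ hpo⟩
  · by_cases hI : Nonempty I
    · obtain ⟨X⟩ := hI
      obtain ⟨Y, -⟩ := h3 s0 X (h2 s0 X h1)
      exact absurd ⟨Y⟩ hO
    · exact ⟨fun _ X => (hI ⟨X⟩).elim, fun s X => (hI ⟨X⟩).elim⟩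

/-- Forward: memoryless invariant strategy gives realizability. -/
lemma strategy_realizable {S I O : Type}
    (δ : S → I → O → Option S) (s0 : S) (ps : S → Prop) (h1 : ps s0)
    (ω : S → I → O)
    (hω : ∀ s X, ps s → ∃ s', δ s X (ω s X) = some s' ∧ ps s') :
    Realizable δ s0 := by
  classical
  by_cases hI : Nonempty I
  case neg =>
    exact ⟨fun _ X => (hI ⟨X⟩).elim, fun xs => (hI ⟨xs 0⟩).elim⟩
  obtain ⟨X0⟩ := hI
  set step : Option S → I → Option S :=
    fun os X => os.bind fun s => δ s X (ω s X) with hstep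
  set reach : List I → Option S := fun l => l.foldl step (some s0) with hreach
  refine ⟨fun hist X => (reach hist).elim (ω s0 X0) (fun s => ω s X), ?_⟩
  intro xs n
  suffices h : ∃ s, runG δ (fun hist X => (reach hist).elim (ω s0 X0) fun s => ω s X) xs s0 n
      = some s ∧ ps s ∧ reach (prefList xs n) = some s by
    obtain ⟨s, hs, -, -⟩ := h
    simp [hs]
  induction n with
  | zero => exact ⟨s0, rfl, h1, rfl⟩
  | succ n ih =>
    obtain ⟨s, hrun, hps, hr⟩ := ih
    obtain ⟨s', hδ, hps'⟩ := hω s (xs n) hps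
    refine ⟨s', ?_, hps', ?_⟩
    · rw [runG, hrun]
      simpa [hr] using hδ
    · rw [prefList_succ]
      show (prefList xs n ++ [xs n]).foldl step (some s0) = some s'
      rw [List.foldl_append]
      show step (reach (prefList xs n)) (xs n) = some s'
      simp [hstep, hr, hδ]

/-- Shifting the run by one step. -/
lemma runG_shift {S I O : Type}
    (δ : S → I → O → Option S) (g : List I → I → O) (s : S) (X : I)
    (s' : S) (hδ : δ s X (g [] X) = some s') (xs' : ℕ → I) (n : ℕ) :
    runG δ g (fun k => Nat.casesOn k X xs') s (n+1)
      = runG δ (fun hist Z => g (X :: hist) Z) xs' s' n := by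
  induction n with
  | zero =>
    show (some s).bind _ = some s'
    simpa [prefList] using hδ
  | succ n ih =>
    rw [runG, ih, runG]
    congr 1
    funext t
    rw [prefList_cons]

lemma realizable_pre {S I O : Type}
    (δ : S → I → O → Option S) (s : S)
    (h : ∃ g : List I → I → O, ∀ xs n, (runG δ g xs s n).isSome) (X : I) :
    ∃ Y s', δ s X Y = some s' ∧
      ∃ g : List I → I → O, ∀ xs n, (runG δ g xs s' n).isSome := by
  obtain ⟨g, hg⟩ := h
  refine ⟨g [] X, ?_⟩
  have h1 := hg (fun _ => X) 1
  have h1' : (δ s X (g [] X)).isSome := by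
    simpa [runG, prefList] using h1
  obtain ⟨s', hδ⟩ := Option.isSome_iff_exists.mp h1'
  refine ⟨s', hδ, fun hist Z => g (X :: hist) Z, fun xs' n => ?_⟩
  rw [← runG_shift δ g s X s' hδ xs' n]
  exact hg _ _

/-- Main theorem. -/
theorem hornEncoding_sat_iff_realizable {S I O : Type} [Fintype S] [Fintype I] [Fintype O]
    (δ : S → I → O → Option S) (s0 : S) :
    ((∃ (ps : S → Prop) (pin : S → I → Prop) (pout : S → I → O → Prop),
        ps s0 ∧
        (∀ s X, ps s → pin s X) ∧
        (∀ s X, pin s X → ∃ Y, pout s X Y) ∧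
        (∀ s X Y s', δ s X Y = some s' → pout s X Y → ps s') ∧
        (∀ s X Y, δ s X Y = none → ¬ pout s X Y)) ↔
      Realizable δ s0) ∧
    (∀ (ps : S → Prop) (pin : S → I → Prop) (pout : S → I → O → Prop),
        ps s0 →
        (∀ s X, ps s → pin s X) →
        (∀ s X, pin s X → ∃ Y, pout s X Y) →
        (∀ s X Y s', δ s X Y = some s' → pout s X Y → ps s') →
        (∀ s X Y, δ s X Y = none → ¬ pout s X Y) →
        ∃ ω : S → I → O, ∀ s X, ps s → ∃ s', δ s X (ω s X) = some s' ∧ ps s') := by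
  constructor
  · constructor
    · rintro ⟨ps, pin, pout, h1, h2, h3, h4, h5⟩
      obtain ⟨ω, hω⟩ := assignment_strategy δ s0 ps pin pout h1 h2 h3 h4 h5
      exact strategy_realizable δ s0 ps h1 ω hω
    · rintro hre
      refine ⟨fun s => ∃ g : List I → I → O, ∀ xs n, (runG δ g xs s n).isSome,
        fun s _ => ∃ g : List I → I → O, ∀ xs n, (runG δ g xs s n).isSome,
        fun s X Y => ∃ s', δ s X Y = some s' ∧
          ∃ g : List I → I → O, ∀ xs n, (runG δ g xs s' n).isSome,
        hre, fun s X hs => hs, ?_, ?_, ?_⟩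
      · rintro s X hs
        obtain ⟨Y, s', hδ, hw⟩ := realizable_pre δ s hs X
        exact ⟨Y, s', hδ, hw⟩
      · rintro s X Y s' hδ ⟨s'', hδ', hw⟩
        rw [hδ] at hδ'
        exact (Option.some_injective _ hδ') ▸ hw
      · rintro s X Y hδ ⟨s'', hδ', -⟩
        rw [hδ] at hδ'
        exact Option.some_ne_none _ hδ'.symm
  · exact fun ps pin pout h1 h2 h3 h4 h5 =>
      assignment_strategy δ s0 ps pin pout h1 h2 h3 h4 h5
end

section
/- Conversely, if the controller has a winning strategy in the safety game over a DSA, then the set C of states reachable under that strategy is a set containing s₀ such that for every s ∈ C and every input X there exists an output Y with δ(s, X∪Y) defined and in C. -/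
/-- States reachable from `s0` when the controller follows strategy `g`. -/
def reachUnder {S I O : Type} (δ : S → I → O → Option S) (g : List I → I → O)
    (s0 : S) : Set S :=
  {s | ∃ (xs : ℕ → I) (n : ℕ), runG δ g xs s0 n = some s}

lemma runG_congr {S I O : Type} (δ : S → I → O → Option S) (g : List I → I → O)
    (xs ys : ℕ → I) (s0 : S) (n : ℕ) (h : ∀ i < n, xs i = ys i) :
    runG δ g xs s0 n = runG δ g ys s0 n := by
  induction n with
  | zero => rfl
  | succ n ih =>
    have hpref : prefList xs n = prefList ys n := by
      simp only [prefList, List.ofFn_inj]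
      funext i
      exact h i (Nat.lt_succ_of_lt i.isLt)
    simp only [runG, ih (fun i hi => h i (Nat.lt_succ_of_lt hi)), hpref,
      h n (Nat.lt_succ_self n)]

/-- If `g` is a winning strategy for the controller in the safety game, then the
set `C` of states reachable under `g` contains `s0`, and from every state of `C`
and every input there is an output whose transition is defined and stays in `C`. -/
theorem winning_strategy_closed_set {S I O : Type} [Nonempty I]
    (δ : S → I → O → Option S) (s0 : S) (g : List I → I → O)
    (hg : ∀ xs : ℕ → I, ∀ n : ℕ, (runG δ g xs s0 n).isSome) :
    s0 ∈ reachUnder δ g s0 ∧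
    ∀ s ∈ reachUnder δ g s0, ∀ X : I, ∃ Y : O, ∃ s',
      δ s X Y = some s' ∧ s' ∈ reachUnder δ g s0 := by
  constructor
  · exact ⟨fun _ => Classical.arbitrary I, 0, rfl⟩
  · rintro s ⟨xs, n, hs⟩ X
    set xs' : ℕ → I := fun i => if i < n then xs i else X with hxs'
    have hrun : runG δ g xs' s0 n = some s := by
      rw [runG_congr δ g xs' xs s0 n (fun i hi => by simp [hxs', hi])]
      exact hs
    have hsome := hg xs' (n + 1)
    rw [runG, hrun] at hsome
    simp only [Option.bind_some] at hsome
    obtain ⟨s', hs'⟩ := Option.isSome_iff_exists.mp hsome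
    have hx : xs' n = X := by simp [hxs']
    rw [hx] at hs'
    exact ⟨g (prefList xs' n) X, s', hs', xs', n + 1, by
      rw [runG, hrun]; simpa [hx] using hs'⟩
end

section
/- If s₀ ∈ Win (the greatest fixpoint of winning states), then the memoryless strategy defined by any function ω : Win × 2^X → 2^Y with δ(q, X ∪ ω(q,X)) ∈ Win for all q ∈ Win and X ∈ 2^X (such a function exists) is a winning strategy for the controller. -/
/-- The run from `s0` induced by a memoryless strategy `ω` against inputs `xs`. -/
def runMemo {S I O : Type} (δ : S → I → O → Option S) (ω : S → I → O)
    (xs : ℕ → I) (s0 : S) : ℕ → Option S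
  | 0 => some s0
  | n + 1 => (runMemo δ ω xs s0 n).bind fun s => δ s (xs n) (ω s (xs n))

lemma winIter_antitone {S I O : Type} (δ : S → I → O → Option S) :
    ∀ {m n : ℕ}, m ≤ n → WinIter δ n ⊆ WinIter δ m := by
  intro m n h
  induction h with
  | refl => exact subset_rfl
  | step h ih => exact fun x hx => ih (Set.inter_subset_left hx)

lemma winIter_stab {S I O : Type} [Fintype S] (δ : S → I → O → Option S) :
    ∃ N : ℕ, WinIter δ (N + 1) = WinIter δ N := by
  by_contra h
  push_neg at h
  have hlt : ∀ n : ℕ, (WinIter δ (n + 1)).ncard < (WinIter δ n).ncard := by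
    intro n
    exact Set.ncard_lt_ncard (HasSubset.Subset.ssubset_of_ne
      Set.inter_subset_left (h n)) (Set.toFinite _)
  have key : ∀ n : ℕ, (WinIter δ n).ncard + n ≤ (WinIter δ 0).ncard := by
    intro n
    induction n with
    | zero => simp
    | succ k ih => have := hlt k; omega
  have := key ((WinIter δ 0).ncard + 1)
  omega

/-- If `s0` is in the greatest fixpoint `Win = ⋂ᵢ Winᵢ` of winning states of a
finite safety game, then a function `ω` with `δ(q, X ∪ ω(q,X)) ∈ Win` for all
`q ∈ Win` and inputs `X` exists, and every such `ω`, used as a memoryless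
strategy, is winning for the controller: all resulting runs from `s0` are
infinite. -/
theorem memoryless_winning {S I O : Type} [Fintype S] [Nonempty I] [Nonempty O]
    (δ : S → I → O → Option S) (s0 : S)
    (h0 : s0 ∈ ⋂ i : ℕ, WinIter δ i) :
    (∃ ω : S → I → O, ∀ q ∈ ⋂ i : ℕ, WinIter δ i, ∀ X : I,
        ∃ s', δ q X (ω q X) = some s' ∧ s' ∈ ⋂ i : ℕ, WinIter δ i) ∧
    (∀ ω : S → I → O,
        (∀ q ∈ ⋂ i : ℕ, WinIter δ i, ∀ X : I,
          ∃ s', δ q X (ω q X) = some s' ∧ s' ∈ ⋂ i : ℕ, WinIter δ i) →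
        ∀ xs : ℕ → I, ∀ n : ℕ, (runMemo δ ω xs s0 n).isSome) := by
  classical
  obtain ⟨N, hN⟩ := winIter_stab δ
  set Win : Set S := ⋂ i : ℕ, WinIter δ i with hWin
  -- WinIter is constant from N on
  have hconst : ∀ k : ℕ, WinIter δ (N + k) = WinIter δ N := by
    intro k
    induction k with
    | zero => rfl
    | succ m ih =>
      have : WinIter δ (N + m + 1) = WinIter δ (N + m) ∩ Pre δ (WinIter δ (N + m)) := rfl
      rw [show N + (m + 1) = N + m + 1 from rfl, this, ih]
      have h1 : WinIter δ (N + 1) = WinIter δ N ∩ Pre δ (WinIter δ N) := rfl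
      rw [← h1, hN]
  have hWinEq : Win = WinIter δ N := by
    apply subset_antisymm (Set.iInter_subset _ N)
    intro x hx
    apply Set.mem_iInter.2
    intro m
    rcases le_or_gt m N with hm | hm
    · exact winIter_antitone δ hm hx
    · have : WinIter δ m = WinIter δ N := by
        have := hconst (m - N); rwa [Nat.add_sub_cancel' hm.le] at this
      rw [this]; exact hx
  have hpre : Win ⊆ Pre δ Win := by
    intro q hq
    have : q ∈ WinIter δ (N + 1) := by rw [hN, ← hWinEq]; exact hq
    have h2 : q ∈ Pre δ (WinIter δ N) := this.2
    rwa [← hWinEq] at h2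
  -- existence of ω
  have hskolem : ∀ q : S, ∀ X : I, ∃ Y : O,
      q ∈ Win → ∃ s', δ q X Y = some s' ∧ s' ∈ Win := by
    intro q X
    by_cases hq : q ∈ Win
    · obtain ⟨Y, s', hs'⟩ := hpre hq X
      exact ⟨Y, fun _ => ⟨s', hs'⟩⟩
    · exact ⟨Classical.arbitrary O, fun h => absurd h hq⟩
  choose ω hω using hskolem
  refine ⟨⟨ω, fun q hq X => hω q X hq⟩, ?_⟩
  intro ω' hω' xs n
  have main : ∀ n : ℕ, ∃ s, runMemo δ ω' xs s0 n = some s ∧ s ∈ Win := by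
    intro n
    induction n with
    | zero => exact ⟨s0, rfl, h0⟩
    | succ m ih =>
      obtain ⟨s, hs, hsW⟩ := ih
      obtain ⟨s', hs', hs'W⟩ := hω' s hsW (xs m)
      refine ⟨s', ?_, hs'W⟩
      simp [runMemo, hs, hs']
  obtain ⟨s, hs, _⟩ := main n
  simp [hs]
end
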